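/- arXiv:2603.24926 — 4 statements merged into one kernel-verified Lean document; each statement's English description precedes it below -/
import Mathlib

section
/- Let n > r ≥ 1 be integers and define α_0 = 0, e_i the least positive integer with 2^{e_i}(1+α_i) - 2^{e_i-1} - (n-r) ≥ 0, and α_{i+1} = 2^{e_i}(1+α_i) - 2^{e_i-1} - (n-r). Then the sum of the series ∑_{j≥0} 2^{-(e_0 + e_1 + ... + e_j)} converges and equals 1/(2(n-r)-1). -/
/-- The series ∑_{j≥0} 2^{-(e₀+⋯+e_j)} converges with sum
1/(2(n-r)-1). -/
theorem stmt3 (n r : ℕ) (hr : 1 ≤ r) (hrn : r < n)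
    (α : ℕ → ℤ) (e : ℕ → ℕ)
    (hα0 : α 0 = 0)
    (he : ∀ i, IsLeast {e' : ℕ | 1 ≤ e' ∧
      0 ≤ 2 ^ e' * (1 + α i) - 2 ^ (e' - 1) - ((n : ℤ) - r)} (e i))
    (hαs : ∀ i, α (i + 1) = 2 ^ (e i) * (1 + α i) - 2 ^ (e i - 1) - ((n : ℤ) - r)) :
    HasSum (fun j : ℕ => (1 : ℝ) / 2 ^ (∑ i ∈ Finset.range (j + 1), e i))
      (1 / (2 * ((n : ℝ) - r) - 1)) := by
  have h1 : ∀ i, 1 ≤ e i := fun i => (he i).1.1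
  have hmem : ∀ i, (0:ℤ) ≤ 2 ^ (e i) * (1 + α i) - 2 ^ (e i - 1) - ((n : ℤ) - r) :=
    fun i => (he i).1.2
  have hrnZ : (r : ℤ) < n := by exact_mod_cast hrn
  -- bounds on α
  have hbound : ∀ i, 0 ≤ α i ∧ α i ≤ (n:ℤ) - r - 1 := by
    intro i
    induction i with
    | zero => rw [hα0]; omega
    | succ k ih =>
      refine ⟨by rw [hαs k]; exact hmem k, ?_⟩
      rw [hαs k]
      rcases Nat.lt_or_ge (e k) 2 with h2 | h2
      · have hek : e k = 1 := le_antisymm (by omega) (h1 k)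
        rw [hek]
        norm_num
        omega
      · have hnot : ¬ ((1 ≤ e k - 1) ∧
            (0:ℤ) ≤ 2 ^ (e k - 1) * (1 + α k) - 2 ^ (e k - 1 - 1) - ((n : ℤ) - r)) := by
          intro hc
          have := (he k).2 hc
          omega
        have hlt : (2:ℤ) ^ (e k - 1) * (1 + α k) - 2 ^ (e k - 1 - 1) - ((n : ℤ) - r) < 0 := by
          by_contra h
          push_neg at h
          exact hnot ⟨by omega, h⟩
        have e1 : (2:ℤ) ^ (e k) = 2 * 2 ^ (e k - 1) := by
          rw [← pow_succ']
          congr 1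
          omega
        have e2 : (2:ℤ) ^ (e k - 1) = 2 * 2 ^ (e k - 1 - 1) := by
          rw [← pow_succ']
          congr 1
          omega
        rw [e1, e2]
        nlinarith [hlt, ih.1, ih.2]
  -- key recurrence in ℤ
  have keyZ : ∀ i, (1:ℤ) + 2 * α (i+1) = 2 ^ (e i) * (1 + 2 * α i) - (2 * ((n:ℤ) - r) - 1) := by
    intro i
    have h := hαs i
    have e1 : (2:ℤ) ^ (e i) = 2 * 2 ^ (e i - 1) := by
      rw [← pow_succ']
      congr 1
      have := h1 i
      omega
    rw [e1] at h ⊢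
    linarith
  -- setup over ℝ
  set M : ℝ := 2 * ((n:ℝ) - r) - 1 with hMdef
  have hM : 1 ≤ M := by
    have : (1:ℝ) ≤ (n:ℝ) - r := by
      have : (r:ℝ) + 1 ≤ n := by exact_mod_cast hrn
      linarith
    simp only [hMdef]; linarith
  have hM0 : 0 < M := by linarith
  set b : ℕ → ℝ := fun i => (1 + 2 * (α i : ℝ)) / M with hbdef
  have keyR : ∀ i, (2:ℝ) ^ (e i) * b i = 1 + b (i+1) := by
    intro i
    have h := keyZ i
    have h' : (1:ℝ) + 2 * (α (i+1) : ℝ)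
        = 2 ^ (e i) * (1 + 2 * (α i : ℝ)) - M := by
      have := congrArg (fun z : ℤ => (z : ℝ)) h
      push_cast at this
      simp only [hMdef]
      linarith
    simp only [hbdef]
    field_simp
    linarith
  have hb0 : b 0 = 1 / M := by simp [hbdef, hα0]
  have hbpos : ∀ i, 0 ≤ b i := by
    intro i
    have := (hbound i).1
    have : (0:ℝ) ≤ 1 + 2 * (α i : ℝ) := by
      have : (0:ℝ) ≤ (α i : ℝ) := by exact_mod_cast (hbound i).1
      linarith
    exact div_nonneg this (le_of_lt hM0)
  have hble : ∀ i, b i ≤ 1 := by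
    intro i
    have h2 : (α i : ℝ) ≤ (n:ℝ) - r - 1 := by
      have := (hbound i).2
      have : ((α i : ℤ) : ℝ) ≤ (((n:ℤ) - r - 1 : ℤ) : ℝ) := by exact_mod_cast this
      push_cast at this
      linarith
    rw [div_le_one hM0]
    simp only [hMdef]
    linarith
  -- partial sums
  have hpartial : ∀ N, ∑ j ∈ Finset.range N, (1:ℝ) / 2 ^ (∑ i ∈ Finset.range (j+1), e i)
      = b 0 - b N / 2 ^ (∑ i ∈ Finset.range N, e i) := by
    intro N
    induction N with
    | zero => simp
    | succ k ih =>
      have hb1 : b (k+1) = 2 ^ (e k) * b k - 1 := by linarith [keyR k]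
      rw [Finset.sum_range_succ, ih, Finset.sum_range_succ (f := e), pow_add, hb1]
      have hp : (0:ℝ) < 2 ^ (∑ i ∈ Finset.range k, e i) := by positivity
      have hq : (0:ℝ) < 2 ^ (e k) := by positivity
      field_simp
      ring
  -- sums of e ≥ N
  have hEsum : ∀ N, N ≤ ∑ i ∈ Finset.range N, e i := by
    intro N
    calc N = ∑ _i ∈ Finset.range N, 1 := by simp
    _ ≤ ∑ i ∈ Finset.range N, e i := Finset.sum_le_sum fun i _ => h1 i
  have htail : ∀ N, b N / 2 ^ (∑ i ∈ Finset.range N, e i) ≤ (1/2 : ℝ) ^ N := by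
    intro N
    have hp : (2:ℝ) ^ N ≤ 2 ^ (∑ i ∈ Finset.range N, e i) :=
      pow_le_pow_right₀ (by norm_num) (hEsum N)
    have hp0 : (0:ℝ) < 2 ^ N := by positivity
    have h2 : b N / 2 ^ (∑ i ∈ Finset.range N, e i) ≤ 1 / 2 ^ N := by
      apply div_le_div₀ (by norm_num : (0:ℝ) ≤ 1) (hble N) hp0 hp
    calc b N / 2 ^ (∑ i ∈ Finset.range N, e i) ≤ 1 / 2 ^ N := h2
    _ = (1/2:ℝ)^N := by rw [div_pow, one_pow]
  have htail0 : ∀ N, 0 ≤ b N / 2 ^ (∑ i ∈ Finset.range N, e i) := by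
    intro N
    apply div_nonneg (hbpos N)
    positivity
  -- tendsto
  have htend : Filter.Tendsto
      (fun N => ∑ j ∈ Finset.range N, (1:ℝ) / 2 ^ (∑ i ∈ Finset.range (j+1), e i))
      Filter.atTop (nhds (b 0)) := by
    have h0 : Filter.Tendsto (fun N => b N / 2 ^ (∑ i ∈ Finset.range N, e i))
        Filter.atTop (nhds 0) := by
      apply squeeze_zero htail0 htail
      exact tendsto_pow_atTop_nhds_zero_of_lt_one (by norm_num) (by norm_num)
    have := Filter.Tendsto.const_sub (b 0) h0
    simp only [sub_zero] at this
    convert this using 1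
    funext N
    exact hpartial N
  rw [show (1 / (2 * ((n : ℝ) - r) - 1)) = b 0 from by rw [hb0]]
  exact (hasSum_iff_tendsto_nat_of_nonneg (fun j => by positivity) _).2 htend
end

section
/- Let n > r ≥ 1 be integers with sequences α_0 = 0, e_i the least positive integer such that 2^{e_i}(1+α_i) - 1 - (n-r) ≥ 0, and α_{i+1} = 2^{e_i}(1+α_i) - 1 - (n-r). Set b_i = (1+α_i)/(n-r). Then 0 < b_i ≤ 1 and 2^{e_i} b_i = 1 + b_{i+1} for all i ≥ 0; consequently ∑_{j≥0} 2^{-(e_0+...+e_j)} = 1/(n-r). -/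
/-- For the xz-variant recursion, with bᵢ = (1+αᵢ)/(n-r) we have
0 < bᵢ ≤ 1 and 2^{eᵢ} bᵢ = 1 + b_{i+1}; consequently
∑_{j≥0} 2^{-(e₀+⋯+e_j)} = 1/(n-r). -/
theorem stmt5 (n r : ℕ) (hr : 1 ≤ r) (hrn : r < n)
    (α : ℕ → ℤ) (e : ℕ → ℕ)
    (hα0 : α 0 = 0)
    (he : ∀ i, IsLeast {e' : ℕ | 1 ≤ e' ∧
      0 ≤ 2 ^ e' * (1 + α i) - 1 - ((n : ℤ) - r)} (e i))
    (hαs : ∀ i, α (i + 1) = 2 ^ (e i) * (1 + α i) - 1 - ((n : ℤ) - r))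
    (b : ℕ → ℚ)
    (hb : ∀ i, b i = (1 + (α i : ℚ)) / ((n : ℚ) - r)) :
    (∀ i, 0 < b i ∧ b i ≤ 1 ∧ 2 ^ (e i) * b i = 1 + b (i + 1)) ∧
      HasSum (fun j : ℕ => (1 : ℝ) / 2 ^ (∑ i ∈ Finset.range (j + 1), e i))
        (1 / ((n : ℝ) - r)) := by
  have hrnZ : (r : ℤ) < n := by exact_mod_cast hrn
  have hd : (1 : ℤ) ≤ (n : ℤ) - r := by linarith
  -- bounds on α
  have hbound : ∀ i, 0 ≤ α i ∧ α i ≤ (n : ℤ) - r - 1 := by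
    intro i
    induction i with
    | zero => constructor <;> simp [hα0] <;> linarith
    | succ i ih =>
      obtain ⟨h0, h1⟩ := ih
      obtain ⟨⟨he1, he2⟩, hmin⟩ := he i
      have key : 2 ^ (e i) * (1 + α i) ≤ 2 * ((n : ℤ) - r) := by
        rcases eq_or_lt_of_le he1 with h | h
        · rw [← h]; nlinarith
        · have hnot : ¬ (e i - 1) ∈ {e' : ℕ | 1 ≤ e' ∧
              0 ≤ 2 ^ e' * (1 + α i) - 1 - ((n : ℤ) - r)} := by
            intro hc
            have := hmin hc
            omega
          simp only [Set.mem_setOf_eq, not_and, not_le] at hnot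
          have h2' : 2 ^ (e i - 1) * (1 + α i) - 1 - ((n : ℤ) - r) < 0 :=
            hnot (by omega)
          have hpow : (2 : ℤ) ^ (e i) = 2 * 2 ^ (e i - 1) := by
            rw [← pow_succ']; congr 1; omega
          rw [hpow]
          have : 2 ^ (e i - 1) * (1 + α i) ≤ (n : ℤ) - r := by linarith
          linarith
      constructor
      · rw [hαs i]; linarith
      · rw [hαs i]; linarith
  have hdQ : (0 : ℚ) < (n : ℚ) - r := by
    have : (r : ℚ) < n := by exact_mod_cast hrn
    linarith
  -- first part
  have hmain : ∀ i, 0 < b i ∧ b i ≤ 1 ∧ 2 ^ (e i) * b i = 1 + b (i + 1) := by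
    intro i
    obtain ⟨h0, h1⟩ := hbound i
    have h0Q : (0 : ℚ) ≤ (α i : ℚ) := by exact_mod_cast h0
    have h1Q : (α i : ℚ) ≤ (n : ℚ) - r - 1 := by
      have : ((α i : ℚ)) ≤ ((n : ℤ) - r - 1 : ℤ) := by exact_mod_cast h1
      push_cast at this; linarith
    refine ⟨?_, ?_, ?_⟩
    · rw [hb i]; positivity
    · rw [hb i, div_le_one hdQ]; linarith
    · have hstep : (α (i + 1) : ℚ) = 2 ^ (e i) * (1 + (α i : ℚ)) - 1 - ((n : ℚ) - r) := by
        have := hαs i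
        exact_mod_cast congrArg (Int.cast : ℤ → ℚ) this
      rw [hb i, hb (i + 1), hstep]
      field_simp
      ring
  refine ⟨hmain, ?_⟩
  -- the sum
  set F : ℕ → ℕ := fun N => ∑ i ∈ Finset.range N, e i with hF
  have hDR : (0 : ℝ) < (n : ℝ) - r := by
    have : (r : ℝ) < n := by exact_mod_cast hrn
    linarith
  have hb0 : b 0 = 1 / ((n : ℚ) - r) := by rw [hb 0, hα0]; norm_num
  -- partial sum formula
  have hpartial : ∀ N, ∑ j ∈ Finset.range N, (1 : ℝ) / 2 ^ (F (j + 1))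
      = 1 / ((n : ℝ) - r) - (b N : ℝ) / 2 ^ (F N) := by
    intro N
    induction N with
    | zero =>
      simp only [Finset.range_zero, Finset.sum_empty, hF, hb0]
      push_cast
      simp
    | succ N ih =>
      rw [Finset.sum_range_succ, ih]
      have hFs : F (N + 1) = F N + e N := Finset.sum_range_succ e N
      have hrec : (b (N + 1) : ℝ) = 2 ^ (e N) * (b N : ℝ) - 1 := by
        have := (hmain N).2.2
        have : ((2 : ℚ) ^ (e N) * b N : ℚ) = 1 + b (N + 1) := this
        have := congrArg (Rat.cast : ℚ → ℝ) this
        push_cast at this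
        linarith
      rw [hFs, hrec, pow_add]
      have h2 : (0 : ℝ) < 2 ^ (F N) := by positivity
      have h3 : (0 : ℝ) < 2 ^ (e N) := by positivity
      field_simp
      ring
  have hFN : ∀ N, N ≤ F N := by
    intro N
    calc N = ∑ _i ∈ Finset.range N, 1 := by simp
    _ ≤ F N := Finset.sum_le_sum fun i _ => (he i).1.1
  -- tail tends to 0
  have htail : Filter.Tendsto (fun N => (b N : ℝ) / 2 ^ (F N)) Filter.atTop (nhds 0) := by
    have hub : ∀ N, (b N : ℝ) / 2 ^ (F N) ≤ (1 / 2 : ℝ) ^ N := by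
      intro N
      have hb1 : (b N : ℝ) ≤ 1 := by exact_mod_cast (hmain N).2.1
      have hp : (2 : ℝ) ^ N ≤ 2 ^ (F N) := by
        apply pow_le_pow_right₀ (by norm_num) (hFN N)
      have h2 : (0 : ℝ) < 2 ^ (F N) := by positivity
      have h2' : (0 : ℝ) < 2 ^ N := by positivity
      rw [div_pow, one_pow]
      rw [div_le_div_iff₀ h2 h2']
      nlinarith
    have hlb : ∀ N, 0 ≤ (b N : ℝ) / 2 ^ (F N) := by
      intro N
      have : (0 : ℝ) < (b N : ℝ) := by exact_mod_cast (hmain N).1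
      positivity
    exact squeeze_zero hlb hub
      (tendsto_pow_atTop_nhds_zero_of_lt_one (by norm_num) (by norm_num))
  have hconv : Filter.Tendsto (fun N => ∑ j ∈ Finset.range N, (1 : ℝ) / 2 ^ (F (j + 1)))
      Filter.atTop (nhds (1 / ((n : ℝ) - r))) := by
    simp only [hpartial]
    have := Filter.Tendsto.const_sub (1 / ((n : ℝ) - r)) htail
    simpa using this
  rw [hasSum_iff_tendsto_nat_of_nonneg (fun j => by positivity)]
  exact hconv
end

section
/- Let n = 2r + 1 (so r < n - r = r + 1), with the recursion α_0 = 0, e_i the least positive integer such that 2^{e_i}(1+α_i) - 2^{e_i-1} - (n-r) ≥ 0, and α_{i+1} = 2^{e_i}(1+α_i) - 2^{e_i-1} - (n-r). Then α_i < r for all i ≥ 0. -/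
/-- For n = 2r + 1, the recursion satisfies αᵢ < r for all i. -/
theorem stmt7 (r : ℕ) (hr : 1 ≤ r) (n : ℕ) (hn : n = 2 * r + 1)
    (α : ℕ → ℤ) (e : ℕ → ℕ)
    (hα0 : α 0 = 0)
    (he : ∀ i, IsLeast {e' : ℕ | 1 ≤ e' ∧
      0 ≤ 2 ^ e' * (1 + α i) - 2 ^ (e' - 1) - ((n : ℤ) - r)} (e i))
    (hαs : ∀ i, α (i + 1) = 2 ^ (e i) * (1 + α i) - 2 ^ (e i - 1) - ((n : ℤ) - r)) :
    ∀ i, α i < (r : ℤ) := by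
  have hnr : (n : ℤ) - r = r + 1 := by
    subst hn; push_cast; ring
  intro i
  induction i with
  | zero =>
    rw [hα0]
    exact_mod_cast hr
  | succ i ih =>
    obtain ⟨⟨h1, _⟩, hmin⟩ := he i
    rcases eq_or_lt_of_le h1 with h | h
    · rw [hαs i, ← h]
      norm_num
      linarith
    · obtain ⟨k, hk⟩ : ∃ k, e i = k + 2 := ⟨e i - 2, by omega⟩
      have hne : ¬ (1 ≤ e i - 1 ∧
          0 ≤ 2 ^ (e i - 1) * (1 + α i) - 2 ^ (e i - 1 - 1) - ((n : ℤ) - r)) := by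
        intro hmem
        have := hmin hmem
        omega
      have hlt : 2 ^ (e i - 1) * (1 + α i) - 2 ^ (e i - 1 - 1) - ((n : ℤ) - r) < 0 := by
        by_contra hc
        exact hne ⟨by omega, by linarith⟩
      rw [hαs i]
      have e1 : k + 2 - 1 = k + 1 := by omega
      have e2 : k + 1 - 1 = k := by omega
      rw [hk] at hlt ⊢
      rw [e1, e2] at hlt
      rw [e1]
      have hp : (2 : ℤ) ^ (k + 2) = 2 * 2 ^ (k + 1) := by ring
      have hp2 : (2 : ℤ) ^ (k + 1) = 2 * 2 ^ k := by ring
      rw [hnr] at hlt ⊢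
      nlinarith [hlt, ih]
end

section
/- Let r ≥ 1 be an integer and n ≥ r + 1 with r ≥ n - r. Then for the recursion α_0 = 0, e_i least positive integer with 2^{e_i}(1+α_i) - 2^{e_i-1} - (n-r) ≥ 0, α_{i+1} = 2^{e_i}(1+α_i) - 2^{e_i-1} - (n-r), we have α_i < r for all i, and consequently ∑_{j≥0} 2^{-(e_0+...+e_j)} = 1/(2(n-r)-1). -/
/-- If r ≥ n - r, then αᵢ < r for all i and
∑_{j≥0} 2^{-(e₀+⋯+e_j)} = 1/(2(n-r)-1). -/
theorem stmt8 (n r : ℕ) (hr : 1 ≤ r) (hrn : r < n) (hbig : n - r ≤ r)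
    (α : ℕ → ℤ) (e : ℕ → ℕ)
    (hα0 : α 0 = 0)
    (he : ∀ i, IsLeast {e' : ℕ | 1 ≤ e' ∧
      0 ≤ 2 ^ e' * (1 + α i) - 2 ^ (e' - 1) - ((n : ℤ) - r)} (e i))
    (hαs : ∀ i, α (i + 1) = 2 ^ (e i) * (1 + α i) - 2 ^ (e i - 1) - ((n : ℤ) - r)) :
    (∀ i, α i < (r : ℤ)) ∧
      HasSum (fun j : ℕ => (1 : ℝ) / 2 ^ (∑ i ∈ Finset.range (j + 1), e i))
        (1 / (2 * ((n : ℝ) - r) - 1)) := by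
  have hm1 : (1 : ℤ) ≤ (n : ℤ) - r := by
    have : (r : ℤ) < n := by exact_mod_cast hrn
    omega
  -- invariant
  have key : ∀ i, 0 ≤ α i ∧ α i ≤ ((n : ℤ) - r) - 1 := by
    intro i
    induction i with
    | zero => rw [hα0]; omega
    | succ i ih =>
      obtain ⟨h0, h1⟩ := ih
      obtain ⟨⟨he1, he2⟩, hmin⟩ := he i
      refine ⟨by rw [hαs i]; exact he2, ?_⟩
      rcases Nat.lt_or_ge (e i) 2 with h | h
      · have h1' : e i = 1 := by omega
        rw [hαs i, h1']
        norm_num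
        linarith
      · obtain ⟨k, hk⟩ : ∃ k, e i = k + 2 := ⟨e i - 2, by omega⟩
        have hneg : 2 ^ (e i - 1) * (1 + α i) - 2 ^ (e i - 1 - 1) - ((n : ℤ) - r) < 0 := by
          by_contra hc
          push_neg at hc
          have := hmin ⟨by omega, hc⟩
          omega
        rw [hk] at hneg
        have hneg' : 2 ^ (k + 1) * (1 + α i) - 2 ^ k - ((n : ℤ) - r) < 0 := hneg
        rw [hαs i, hk]
        show 2 ^ (k + 2) * (1 + α i) - 2 ^ (k + 1) - ((n : ℤ) - r) ≤ (n : ℤ) - r - 1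
        have p1 : (2 : ℤ) ^ (k + 2) = 2 * 2 ^ (k + 1) := by ring
        have p2 : (2 : ℤ) ^ (k + 1) = 2 * 2 ^ k := by ring
        have hneg2 := Int.lt_iff_add_one_le.mp hneg'
        have p3 : (2 : ℤ) ^ (k + 2) * (1 + α i) = 2 * (2 ^ (k + 1) * (1 + α i)) := by ring
        linarith
  have hαlt : ∀ i, α i < (r : ℤ) := by
    intro i
    have := (key i).2
    have h2 : (n : ℤ) ≤ 2 * r := by
      have h3 : n ≤ 2 * r := by clear * - hbig hrn; omega
      exact_mod_cast h3
    omega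
  refine ⟨hαlt, ?_⟩
  -- the real part
  set D : ℝ := 2 * ((n : ℝ) - r) - 1 with hD
  have hD1 : (1 : ℝ) ≤ D := by
    have : (1 : ℝ) ≤ (n : ℝ) - r := by exact_mod_cast hm1
    rw [hD]; linarith
  have hD0 : (0 : ℝ) < D := by linarith
  set c : ℕ → ℝ := fun N => (1 + 2 * (α N : ℝ)) / (D * 2 ^ (∑ i ∈ Finset.range N, e i))
    with hc
  -- key algebraic relation
  have hrel : ∀ j, (1 : ℝ) + 2 * (α (j + 1) : ℝ) = 2 ^ (e j) * (1 + 2 * (α j : ℝ)) - D := by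
    intro j
    obtain ⟨k, hk⟩ : ∃ k, e j = k + 1 := ⟨e j - 1, by have := (he j).1.1; omega⟩
    have hz : (1 : ℤ) + 2 * α (j + 1) = 2 ^ (e j) * (1 + 2 * α j) - (2 * ((n : ℤ) - r) - 1) := by
      rw [hαs j, hk]
      simp only [Nat.add_sub_cancel]
      ring
    rw [hD]
    have := congrArg (fun x : ℤ => (x : ℝ)) hz
    push_cast at this
    push_cast
    linarith
  have hstep : ∀ j, c j - c (j + 1) = 1 / 2 ^ (∑ i ∈ Finset.range (j + 1), e i) := by
    intro j
    have hs : ∑ i ∈ Finset.range (j + 1), e i = (∑ i ∈ Finset.range j, e i) + e j :=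
      Finset.sum_range_succ e j
    rw [hc]
    simp only
    rw [hs, hrel j]
    have h2 : (0 : ℝ) < (2 : ℝ) ^ (∑ i ∈ Finset.range j, e i) := by positivity
    have h3 : (0 : ℝ) < (2 : ℝ) ^ (e j) := by positivity
    field_simp
    ring
  -- partial sums
  have hpartial : ∀ N, ∑ j ∈ Finset.range N,
      (1 : ℝ) / 2 ^ (∑ i ∈ Finset.range (j + 1), e i) = c 0 - c N := by
    intro N
    rw [← Finset.sum_range_sub' c N]
    exact Finset.sum_congr rfl fun j _ => (hstep j).symm
  have hc0 : c 0 = 1 / D := by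
    rw [hc]; simp [hα0]
  -- bounds on c N
  have hcbound : ∀ N, 0 ≤ c N ∧ c N ≤ (1 / 2) ^ N := by
    intro N
    have ⟨k0, k1⟩ := key N
    have hb0 : (0 : ℝ) ≤ 1 + 2 * (α N : ℝ) := by
      have : (0 : ℝ) ≤ (α N : ℝ) := by exact_mod_cast k0
      linarith
    have hb1 : 1 + 2 * (α N : ℝ) ≤ D := by
      have : (α N : ℝ) ≤ ((n : ℝ) - r) - 1 := by
        have := congrArg (fun x : ℤ => (x : ℝ)) (rfl : α N = α N)
        have h := k1
        have : ((α N : ℤ) : ℝ) ≤ (((n : ℤ) - r - 1 : ℤ) : ℝ) := by exact_mod_cast h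
        push_cast at this
        exact this
      rw [hD]; linarith
    have hSN : N ≤ ∑ i ∈ Finset.range N, e i := by
      calc N = ∑ _i ∈ Finset.range N, 1 := by simp
        _ ≤ ∑ i ∈ Finset.range N, e i :=
          Finset.sum_le_sum fun i _ => (he i).1.1
    have hp : (2 : ℝ) ^ N ≤ 2 ^ (∑ i ∈ Finset.range N, e i) :=
      pow_le_pow_right₀ (by norm_num) hSN
    have hp0 : (0 : ℝ) < (2 : ℝ) ^ (∑ i ∈ Finset.range N, e i) := by positivity
    constructor
    · exact div_nonneg hb0 (by positivity)
    · rw [hc]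
      simp only
      rw [div_pow, one_pow]
      calc (1 + 2 * (α N : ℝ)) / (D * 2 ^ (∑ i ∈ Finset.range N, e i))
          ≤ D / (D * 2 ^ (∑ i ∈ Finset.range N, e i)) :=
            div_le_div_of_nonneg_right hb1 (by positivity)
        _ = 1 / 2 ^ (∑ i ∈ Finset.range N, e i) := by
            field_simp
        _ ≤ 1 / 2 ^ N := by
            apply one_div_le_one_div_of_le (by positivity) hp
  have hclim : Filter.Tendsto c Filter.atTop (nhds 0) := by
    have h1 : Filter.Tendsto (fun N : ℕ => ((1 : ℝ) / 2) ^ N) Filter.atTop (nhds 0) :=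
      tendsto_pow_atTop_nhds_zero_of_lt_one (by norm_num) (by norm_num)
    exact squeeze_zero (fun N => (hcbound N).1) (fun N => (hcbound N).2) h1
  rw [hasSum_iff_tendsto_nat_of_nonneg (fun j => by positivity)]
  have : Filter.Tendsto (fun N => c 0 - c N) Filter.atTop (nhds (c 0 - 0)) :=
    Filter.Tendsto.const_sub _ hclim
  rw [sub_zero, hc0] at this
  have heq : (fun N : ℕ => ∑ j ∈ Finset.range N,
      (1 : ℝ) / 2 ^ (∑ i ∈ Finset.range (j + 1), e i)) = fun N => c 0 - c N :=
    funext hpartial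
  rw [heq, hc0]
  exact this
end
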